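/- Let X_1, ..., X_D be independent random vectors, each taking values in R^L and square-integrable, let f be the additive model f = Σ_{j=1}^{D} g_j(X_j) with each g_j(X_j) square-integrable, and let Y be a square-integrable real-valued target. Suppose W* ⊆ {1, ..., L} is a window for feature 1 such that g_1 depends only on the coordinates in W*, i.e., g_1(X_1) = g_{W*}(X_{1,W*}) and the out-of-window component g_{W̄*}(X_{1,W̄*}) is identically 0, with g_{W*}(X_{1,W*}) square-integrable. Let X_1' be an independent copy of X_1, independent of (X_1, ..., X_D, Y). Then the expected importance score of the full sequence of feature 1 equals the expected importance score of the window W*, and both equal 2*cov(Y, g_1(X_1)); that is, E[ I(f, X_1, {1,...,L}) ] = E[ I(f, X_1, W*) ] = 2*cov(Y, g_1(X_1)). -/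

import Mathlib

open MeasureTheory ProbabilityTheory Finset

/-- Covariance of two real-valued random variables w.r.t. a measure `μ`. -/
noncomputable def cov {Ω : Type*} [MeasurableSpace Ω] (μ : Measure Ω) (X Y : Ω → ℝ) : ℝ :=
  ∫ ω, (X ω - ∫ ω', X ω' ∂μ) * (Y ω - ∫ ω', Y ω' ∂μ) ∂μ

/-- The importance score `I(f, X 0, W)` of the time window `W` for feature `0` of the additive
model `f = Σ_j g_j (X j)` under quadratic loss: the expected increase in loss when the
coordinates of `X 0` inside `W` are replaced by the corresponding coordinates of the
independent copy `X₁'`, with all other coordinates of `X 0`, all other features, and the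
target `Y` held fixed. -/
noncomputable def windowImportance {Ω : Type*} [MeasurableSpace Ω] (μ : Measure Ω)
    {D L : ℕ} [NeZero D] (X : Fin D → Ω → (Fin L → ℝ)) (g : Fin D → (Fin L → ℝ) → ℝ)
    (Y : Ω → ℝ) (X₁' : Ω → (Fin L → ℝ)) (W : Finset (Fin L)) : ℝ :=
  (∫ ω, (Y ω - (g 0 (fun k => if k ∈ W then X₁' ω k else X 0 ω k)
      + ∑ j ∈ univ.erase 0, g j (X j ω))) ^ 2 ∂μ)
    - ∫ ω, (Y ω - ∑ j, g j (X j ω)) ^ 2 ∂μ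

/-!
For every window `W ⊇ W*`, perturbing the coordinates in `W` turns `g₀(X₀)` into `g₀(X')`,
so the importance score of `W` is `E[(R - g₀(X'))²] - E[(R - g₀(X₀))²]` with residual
`R = Y - Σ_{j ≠ 0} g_j(X_j)`. Writing `E[Z²] = Var Z + (E Z)²`, the means of `R - g₀(X')` and
`R - g₀(X₀)` agree, and since `g₀(X')` is an independent copy of `g₀(X₀)` the variances differ
by `2 cov(R, g₀(X₀))`. Independence of the features kills `cov(g_j(X_j), g₀(X₀))` for `j ≠ 0`,
leaving `2 cov(Y, g₀(X₀))`.
-/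

lemma cov_eq_covariance {Ω : Type*} [MeasurableSpace Ω] (μ : Measure Ω) (X Y : Ω → ℝ) :
    cov μ X Y = cov[X, Y; μ] := rfl

section Moments

variable {Ω : Type*} [MeasurableSpace Ω] {μ : Measure Ω} [IsProbabilityMeasure μ]

lemma integral_sq_eq_variance_add_sq {Z : Ω → ℝ} (hZ : MemLp Z 2 μ) :
    ∫ ω, Z ω ^ 2 ∂μ = Var[Z; μ] + μ[Z] ^ 2 := by
  rw [variance_eq_sub hZ]
  simp only [Pi.pow_apply]
  ring

lemma integral_sq_sub_indepCopy_sub_integral_sq_sub {R S G : Ω → ℝ}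
    (hR : MemLp R 2 μ) (hS : MemLp S 2 μ) (hGS : IdentDistrib G S μ μ) (hGR : IndepFun G R μ) :
    ∫ ω, (R ω - G ω) ^ 2 ∂μ - ∫ ω, (R ω - S ω) ^ 2 ∂μ = 2 * cov[R, S; μ] := by
  have hG : MemLp G 2 μ := hGS.memLp_iff.mpr hS
  have hmean : μ[R - G] = μ[R - S] := by
    rw [integral_sub' (hR.integrable one_le_two) (hG.integrable one_le_two),
      integral_sub' (hR.integrable one_le_two) (hS.integrable one_le_two), hGS.integral_eq]
  have hRG : cov[R, G; μ] = 0 := hGR.symm.covariance_eq_zero hR hG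
  have hsqG : ∫ ω, (R ω - G ω) ^ 2 ∂μ = Var[R - G; μ] + μ[R - G] ^ 2 :=
    integral_sq_eq_variance_add_sq (hR.sub hG)
  have hsqS : ∫ ω, (R ω - S ω) ^ 2 ∂μ = Var[R - S; μ] + μ[R - S] ^ 2 :=
    integral_sq_eq_variance_add_sq (hR.sub hS)
  rw [hsqG, hsqS, variance_sub hR hG, variance_sub hR hS, hGS.variance_eq, hRG, hmean]
  ring

lemma covariance_sum_comp_comp_eq_zero {ι E : Type*} [MeasurableSpace E] {X : ι → Ω → E}
    (hX : iIndepFun X μ) {g : ι → E → ℝ} (hg : ∀ j, Measurable (g j))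
    (hgX : ∀ j, MemLp (fun ω => g j (X j ω)) 2 μ) {s : Finset ι} {i : ι} (hi : i ∉ s) :
    cov[fun ω => ∑ j ∈ s, g j (X j ω), fun ω => g i (X i ω); μ] = 0 := by
  rw [covariance_fun_sum_left' (fun j _ => hgX j) (hgX i)]
  refine sum_eq_zero fun j hj => ?_
  have hji : j ≠ i := fun h => hi (h ▸ hj)
  exact ((hX.indepFun hji).comp (hg j) (hg i)).covariance_eq_zero (hgX j) (hgX i)

end Moments

lemma windowImportance_eq_of_comp_perturbed_eq {Ω : Type*} [MeasurableSpace Ω]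
    (μ : Measure Ω) {D L : ℕ} [NeZero D] (X : Fin D → Ω → (Fin L → ℝ))
    (g : Fin D → (Fin L → ℝ) → ℝ) (Y : Ω → ℝ) (X₁' : Ω → (Fin L → ℝ)) (W : Finset (Fin L))
    (hW : ∀ ω, g 0 (fun k => if k ∈ W then X₁' ω k else X 0 ω k) = g 0 (X₁' ω)) :
    windowImportance μ X g Y X₁' W
      = ∫ ω, (Y ω - ∑ j ∈ univ.erase 0, g j (X j ω) - g 0 (X₁' ω)) ^ 2 ∂μ
        - ∫ ω, (Y ω - ∑ j ∈ univ.erase 0, g j (X j ω) - g 0 (X 0 ω)) ^ 2 ∂μ := by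
  unfold windowImportance
  congr 1 <;> refine integral_congr_ae (ae_of_all _ fun ω => ?_) <;> dsimp only
  · rw [hW]
    ring
  · rw [← add_sum_erase univ _ (mem_univ 0)]
    ring

theorem expected_importance_relevant_window_general
    {Ω : Type*} [MeasurableSpace Ω] (μ : Measure Ω) [IsProbabilityMeasure μ]
    (D L : ℕ) [NeZero D]
    (X : Fin D → Ω → (Fin L → ℝ))
    (hXindep : iIndepFun X μ)
    (g : Fin D → (Fin L → ℝ) → ℝ) (hgmeas : ∀ j, Measurable (g j))
    (hgL2 : ∀ j, MemLp (fun ω => g j (X j ω)) 2 μ)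
    (Wstar : Finset (Fin L))
    -- `g 0` depends only on the coordinates inside `W*` (the out-of-window component of the
    -- additive decomposition of `g 0` is identically `0`):
    (hgdep : ∀ x x' : Fin L → ℝ, (∀ k ∈ Wstar, x k = x' k) → g 0 x = g 0 x')
    (Y : Ω → ℝ) (hY : MemLp Y 2 μ)
    (X₁' : Ω → (Fin L → ℝ))
    (hid : IdentDistrib X₁' (X 0) μ μ)
    (hindep : IndepFun X₁' (fun ω => ((fun j => X j ω), Y ω)) μ) :
    windowImportance μ X g Y X₁' univ = windowImportance μ X g Y X₁' Wstar ∧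
    windowImportance μ X g Y X₁' Wstar = 2 * cov μ Y (fun ω => g 0 (X 0 ω)) := by
  have hT : MemLp (fun ω => ∑ j ∈ univ.erase 0, g j (X j ω)) 2 μ :=
    memLp_finsetSum _ fun j _ => hgL2 j
  have hresidual : IndepFun (fun ω => g 0 (X₁' ω))
      (fun ω => Y ω - ∑ j ∈ univ.erase 0, g j (X j ω)) μ :=
    hindep.comp (hgmeas 0)
      (ψ := fun p : (Fin D → Fin L → ℝ) × ℝ => p.2 - ∑ j ∈ univ.erase 0, g j (p.1 j))
      (by fun_prop)
  have hscore : ∀ W, Wstar ⊆ W →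
      windowImportance μ X g Y X₁' W = 2 * cov μ Y (fun ω => g 0 (X 0 ω)) := by
    intro W hW
    rw [windowImportance_eq_of_comp_perturbed_eq μ X g Y X₁' W
        fun ω => hgdep _ _ fun k hk => if_pos (hW hk)]
    refine (integral_sq_sub_indepCopy_sub_integral_sq_sub (hY.sub hT) (hgL2 0)
      (hid.comp (hgmeas 0)) hresidual).trans ?_
    rw [covariance_sub_left hY hT (hgL2 0),
      covariance_sum_comp_comp_eq_zero hXindep hgmeas hgL2 (notMem_erase 0 univ),
      cov_eq_covariance, sub_zero]
  exact ⟨(hscore univ (subset_univ _)).trans (hscore Wstar subset_rfl).symm,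
    hscore Wstar subset_rfl⟩

/-- Corollary to Proposition 1: if the feature-0 component `g 0` of the additive model depends
only on the coordinates of `X 0` inside the relevant window `W*` (i.e. the out-of-window
component is identically zero), then the expected importance score of the full sequence equals
the expected importance score of `W*`, and both equal `2 * cov(Y, g 0 (X 0))`. -/
theorem expected_importance_relevant_window
    {Ω : Type*} [MeasurableSpace Ω] (μ : Measure Ω) [IsProbabilityMeasure μ]
    (D L : ℕ) [NeZero D]
    (X : Fin D → Ω → (Fin L → ℝ)) (hXmeas : ∀ j, Measurable (X j))
    (hXL2 : ∀ j, MemLp (X j) 2 μ)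
    (hXindep : iIndepFun X μ)
    (g : Fin D → (Fin L → ℝ) → ℝ) (hgmeas : ∀ j, Measurable (g j))
    (hgL2 : ∀ j, MemLp (fun ω => g j (X j ω)) 2 μ)
    (Wstar : Finset (Fin L))
    -- `g 0` depends only on the coordinates inside `W*` (the out-of-window component of the
    -- additive decomposition of `g 0` is identically `0`):
    (hgdep : ∀ x x' : Fin L → ℝ, (∀ k ∈ Wstar, x k = x' k) → g 0 x = g 0 x')
    (Y : Ω → ℝ) (hY : MemLp Y 2 μ)
    (X₁' : Ω → (Fin L → ℝ)) (hX₁'meas : Measurable X₁')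
    (hid : IdentDistrib X₁' (X 0) μ μ)
    (hindep : IndepFun X₁' (fun ω => ((fun j => X j ω), Y ω)) μ) :
    windowImportance μ X g Y X₁' univ = windowImportance μ X g Y X₁' Wstar ∧
    windowImportance μ X g Y X₁' Wstar = 2 * cov μ Y (fun ω => g 0 (X 0 ω)) :=
  expected_importance_relevant_window_general μ D L X hXindep g hgmeas hgL2 Wstar hgdep Y hY X₁' hid
    hindep
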